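/- There is no non-trivial polynomial f of degree n ≥ 3 with only real roots, having exactly three distinct roots, such that f shares a root with f^{(n-2)} and with f^{(n-1)}. -/

import Mathlib

/-!
If `f` has all its roots `l` real, `f^(n-1)` is linear with the mean `μ` of the roots as its only
root, and every root `x` of the quadratic `f^(n-2)` satisfies `∑ (l - x)² = (∑ (l - x))²`, that is
`n (n - 1) (x - μ)² = ∑ (l - μ)²`. Suppose `μ` and `x` are among three distinct roots `μ, b, c`
of multiplicities `p, q, r`. Then `x = μ` would force all roots to be equal, while `x = b`
together with `q (b - μ) + r (c - μ) = 0` gives `q (q + r) = r n (n - 1)`, impossible since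
`n - 1 ≥ q + r`.
-/

open Polynomial Finset
open scoped Nat

theorem weighted_sum_sq_sub_ne_sq_weighted_sum_sub {K : Type*} [CommRing K] [LinearOrder K]
    [IsStrictOrderedRing K] {p q r a b c : K} (hp : 1 ≤ p) (hq : 1 ≤ q) (hr : 1 ≤ r)
    (hab : a ≠ b) (hmean : q * (b - a) + r * (c - a) = 0) :
    p * (a - b) ^ 2 + r * (c - b) ^ 2 ≠ (p * (a - b) + r * (c - b)) ^ 2 := by
  intro h
  set n := p + q + r
  -- With `β = b - a`, `γ = c - a`, `h` says `q β² + r γ² = n (n - 1) β²`; multiply by `r` and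
  -- substitute `r γ = -q β`.
  have key : (q * (q + r) - r * n * (n - 1)) * (b - a) ^ 2 = 0 := by
    linear_combination r * h + (r * (2 * (b - a) - 2 * n * (b - a) + (q * (b - a) + r * (c - a)))
      - (q * (b - a) + r * (c - a) - 2 * q * (b - a))) * hmean
  have hweights : q * (q + r) = r * (n * (n - 1)) := by
    linear_combination (mul_eq_zero.1 key).resolve_right (pow_ne_zero 2 (sub_ne_zero.2 hab.symm))
  refine hweights.not_lt ?_
  calc q * (q + r) < n * (q + r) := by nlinarith
    _ ≤ n * (n - 1) := by nlinarith
    _ ≤ r * (n * (n - 1)) := le_mul_of_one_le_left (by nlinarith) hr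

namespace Multiset

variable {R : Type*}

theorem esymm_one [CommSemiring R] (s : Multiset R) : s.esymm 1 = s.sum := by
  simp [esymm, powersetCard_one]

theorem two_mul_esymm_two_add_sum_map_sq [CommSemiring R] (s : Multiset R) :
    2 * s.esymm 2 + (s.map (· ^ 2)).sum = s.sum ^ 2 := by
  induction s using Multiset.induction with
  | empty => simp [esymm, powersetCard_zero_right]
  | cons a s ih =>
    have h : (a ::ₘ s).esymm 2 = s.esymm 2 + a * s.sum := by
      simp only [esymm, powersetCard_cons, powersetCard_one, map_add, map_map,
        Function.comp_apply, prod_cons, prod_singleton, sum_add]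
      rw [sum_map_mul_left, map_id']
    rw [h, sum_cons, map_cons, sum_cons, add_sq, ← ih]
    ring

theorem sum_map_sub_const [CommRing R] (s : Multiset R) (x : R) :
    (s.map (· - x)).sum = s.sum - s.card * x := by
  simp [sum_map_sub]

theorem sum_map_sub_const_sq [CommRing R] (s : Multiset R) (x : R) :
    (s.map fun l => (l - x) ^ 2).sum = (s.map (· ^ 2)).sum - 2 * x * s.sum + s.card * x ^ 2 := by
  induction s using Multiset.induction with
  | empty => simp
  | cons a s ih => simp only [map_cons, sum_cons, ih, card_cons]; push_cast; ring

theorem sum_map_sub_sq_ne_sq_sum_map_sub {K : Type*} [CommRing K] [LinearOrder K]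
    [IsStrictOrderedRing K] {L : Multiset K} (hL : L.toFinset.card = 3) {μ x : K} (hμ : μ ∈ L)
    (hmean : (L.map (· - μ)).sum = 0) (hx : x ∈ L) :
    (L.map fun l => (l - x) ^ 2).sum ≠ (L.map (· - x)).sum ^ 2 := by
  have hμ' : μ ∈ L.toFinset := mem_toFinset.2 hμ
  obtain ⟨b, c, hbc, hbc'⟩ := Finset.card_eq_two.1
    (by rw [Finset.card_erase_of_mem hμ', hL] : (L.toFinset.erase μ).card = 2)
  have hb : b ≠ μ := ne_of_mem_erase (s := L.toFinset) (by simp [hbc'])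
  have hc : c ≠ μ := ne_of_mem_erase (s := L.toFinset) (by simp [hbc'])
  have hset : L.toFinset = {μ, b, c} := by rw [← insert_erase hμ', hbc']
  have hsum (g : K → K) :
      (L.map g).sum = L.count μ * g μ + L.count b * g b + L.count c * g c := by
    rw [Finset.sum_multiset_map_count, hset, Finset.sum_insert (by simp [hb.symm, hc.symm]),
      Finset.sum_pair hbc]
    simp only [nsmul_eq_mul, add_assoc]
  have hcount (y : K) (hy : y ∈ L.toFinset) : (1 : K) ≤ L.count y := by
    exact_mod_cast count_pos.2 (mem_toFinset.1 hy)
  have hpμ := hcount μ hμ'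
  have hpb := hcount b (by simp [hset])
  have hpc := hcount c (by simp [hset])
  rw [hsum] at hmean
  simp only [sub_self, mul_zero, zero_add] at hmean
  rw [hsum, hsum]
  have hx' : x ∈ ({μ, b, c} : Finset K) := hset ▸ mem_toFinset.2 hx
  simp only [Finset.mem_insert, Finset.mem_singleton] at hx'
  rcases hx' with rfl | rfl | rfl
  · intro h
    have hvar : L.count b * (b - x) ^ 2 + L.count c * (c - x) ^ 2 = 0 := by
      linear_combination h + (L.count b * (b - x) + L.count c * (c - x)) * hmean
    refine (add_pos_of_pos_of_nonneg ?_ ?_).ne' hvar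
    · exact mul_pos (by linarith) (sq_pos_of_ne_zero (sub_ne_zero.2 hb))
    · positivity
  · exact fun h => weighted_sum_sq_sub_ne_sq_weighted_sum_sub hpμ hpb hpc hb.symm hmean
      (by linear_combination h)
  · exact fun h => weighted_sum_sq_sub_ne_sq_weighted_sum_sub hpμ hpc hpb hc.symm (c := b)
      (by linear_combination hmean) (by linear_combination h)

end Multiset

namespace Polynomial

variable {R : Type*}

section Semiring

variable [CommSemiring R] {p : R[X]} {k : ℕ}

theorem eval_iterate_derivative_eq_sum {d : ℕ} (hp : p.natDegree ≤ k + d) (x : R) :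
    (derivative^[k] p).eval x =
      k ! * ∑ m ∈ range (d + 1), ((m + k).choose k : R) * p.coeff (m + k) * x ^ m := by
  have hdeg : (derivative^[k] p).natDegree < d + 1 :=
    (natDegree_iterate_derivative p k).trans_lt (by omega)
  rw [eval_eq_sum_range' hdeg, mul_sum]
  refine sum_congr rfl fun m _ => ?_
  rw [coeff_iterate_derivative, Nat.descFactorial_eq_factorial_mul_choose, nsmul_eq_mul]
  push_cast
  ring

theorem eval_iterate_derivative_of_natDegree_eq_add_one (hp : p.natDegree = k + 1) (x : R) :
    (derivative^[k] p).eval x = k ! * ((k + 1) * p.leadingCoeff * x + p.coeff k) := by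
  rw [eval_iterate_derivative_eq_sum hp.le, leadingCoeff, hp]
  simp only [sum_range_succ, sum_range_zero, zero_add, add_comm 1 k, Nat.choose_self,
    Nat.choose_succ_self_right, Nat.cast_add, Nat.cast_one]
  ring

theorem two_mul_eval_iterate_derivative_of_natDegree_eq_add_two (hp : p.natDegree = k + 2)
    (x : R) :
    2 * (derivative^[k] p).eval x = k ! *
      ((k + 2) * (k + 1) * p.leadingCoeff * x ^ 2 + 2 * (k + 1) * p.coeff (k + 1) * x +
        2 * p.coeff k) := by
  have hchoose : 2 * (k + 2).choose k = (k + 2) * (k + 1) := by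
    rw [Nat.choose_symm_add, Nat.choose_two_right,
      Nat.mul_div_cancel' (Nat.even_mul_pred_self _).two_dvd]
    rfl
  replace hchoose := congrArg (Nat.cast : ℕ → R) hchoose
  push_cast at hchoose
  rw [eval_iterate_derivative_eq_sum hp.le, leadingCoeff, hp, ← hchoose]
  simp only [sum_range_succ, sum_range_zero, zero_add, add_comm 1 k, add_comm 2 k,
    Nat.choose_self, Nat.choose_succ_self_right, Nat.cast_add, Nat.cast_one]
  ring

end Semiring

variable [CommRing R] [IsDomain R] [CharZero R] {p : R[X]}

theorem sum_map_roots_sub_eq_zero_of_eval_iterate_derivative_eq_zero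
    (hroots : p.roots.card = p.natDegree) (hp : 0 < p.natDegree) {x : R}
    (hx : (derivative^[p.natDegree - 1] p).eval x = 0) : (p.roots.map (· - x)).sum = 0 := by
  obtain ⟨k, hk⟩ : ∃ k, p.natDegree = k + 1 := ⟨_, (Nat.succ_pred_eq_of_pos hp).symm⟩
  have hnext : p.coeff k = -(p.leadingCoeff * p.roots.sum) := by
    rw [coeff_eq_esymm_roots_of_card hroots (by omega), hk, Nat.add_sub_cancel_left,
      Multiset.esymm_one]
    ring
  rw [hk, Nat.add_sub_cancel, eval_iterate_derivative_of_natDegree_eq_add_one hk, hnext] at hx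
  have hlin := (mul_eq_zero.1 hx).resolve_left (Nat.cast_ne_zero.2 k.factorial_ne_zero)
  have key : p.leadingCoeff * (p.roots.map (· - x)).sum = 0 := by
    rw [Multiset.sum_map_sub_const, hroots, hk]
    push_cast
    linear_combination -hlin
  exact (mul_eq_zero.1 key).resolve_left (leadingCoeff_ne_zero.2 (ne_zero_of_natDegree_gt hp))

theorem sum_map_roots_sub_sq_eq_sq_of_eval_iterate_derivative_eq_zero
    (hroots : p.roots.card = p.natDegree) (hp : 2 ≤ p.natDegree) {x : R}
    (hx : (derivative^[p.natDegree - 2] p).eval x = 0) :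
    (p.roots.map fun l => (l - x) ^ 2).sum = (p.roots.map (· - x)).sum ^ 2 := by
  obtain ⟨k, hk⟩ : ∃ k, p.natDegree = k + 2 := ⟨p.natDegree - 2, by omega⟩
  have hnext : p.coeff (k + 1) = -(p.leadingCoeff * p.roots.sum) := by
    rw [coeff_eq_esymm_roots_of_card hroots (by omega), hk, show k + 2 - (k + 1) = 1 by omega,
      Multiset.esymm_one]
    ring
  have hnext2 : p.coeff k = p.leadingCoeff * p.roots.esymm 2 := by
    rw [coeff_eq_esymm_roots_of_card hroots (by omega), hk, Nat.add_sub_cancel_left]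
    ring
  have heval := two_mul_eval_iterate_derivative_of_natDegree_eq_add_two hk x
  rw [hk, Nat.add_sub_cancel] at hx
  rw [hx, mul_zero, hnext, hnext2] at heval
  have hquad := (mul_eq_zero.1 heval.symm).resolve_left (Nat.cast_ne_zero.2 k.factorial_ne_zero)
  have key : p.leadingCoeff *
      ((p.roots.map fun l => (l - x) ^ 2).sum - (p.roots.map (· - x)).sum ^ 2) = 0 := by
    rw [Multiset.sum_map_sub_const_sq, Multiset.sum_map_sub_const, hroots, hk]
    push_cast
    linear_combination -hquad + p.leadingCoeff * p.roots.two_mul_esymm_two_add_sum_map_sq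
  exact sub_eq_zero.1
    ((mul_eq_zero.1 key).resolve_left (leadingCoeff_ne_zero.2 (ne_zero_of_natDegree_gt hp)))

end Polynomial

theorem stmt_6_general (n : ℕ) (f : ℝ[X]) (hdeg : f.natDegree = n)
    (hreal : f.roots.card = n) (hdistinct : f.roots.toFinset.card = 3)
    (h2 : ∃ x : ℝ, f.eval x = 0 ∧ (derivative^[n - 2] f).eval x = 0)
    (h1 : ∃ x : ℝ, f.eval x = 0 ∧ (derivative^[n - 1] f).eval x = 0) :
    False := by
  obtain ⟨x₂, hfx₂, hx₂⟩ := h2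
  obtain ⟨x₁, hfx₁, hx₁⟩ := h1
  subst hdeg
  have h3 : 3 ≤ f.natDegree := hreal ▸ hdistinct ▸ Multiset.toFinset_card_le f.roots
  have hf : f ≠ 0 := ne_zero_of_natDegree_gt h3
  exact Multiset.sum_map_sub_sq_ne_sq_sum_map_sub hdistinct ((mem_roots hf).2 hfx₁)
    (sum_map_roots_sub_eq_zero_of_eval_iterate_derivative_eq_zero hreal (by omega) hx₁)
    ((mem_roots hf).2 hfx₂)
    (sum_map_roots_sub_sq_eq_sq_of_eval_iterate_derivative_eq_zero hreal (by omega) hx₂)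

theorem stmt_6 (n : ℕ) (hn : 3 ≤ n) (f : ℝ[X]) (hdeg : f.natDegree = n)
    (hreal : f.roots.card = n) (hdistinct : f.roots.toFinset.card = 3)
    (h2 : ∃ x : ℝ, f.eval x = 0 ∧ (derivative^[n - 2] f).eval x = 0)
    (h1 : ∃ x : ℝ, f.eval x = 0 ∧ (derivative^[n - 1] f).eval x = 0) :
    False :=
  stmt_6_general n f hdeg hreal hdistinct h2 h1
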